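/- For a directed graph E (a 1-graph viewed as a 1-graph), E is tight if and only if no cycle of E has an entrance. -/

import Mathlib

/-!
If no cycle has an entrance, an infinite path `x` with `σ^p x = σ^q x`, `q < p`, runs from
position `q` on along a cycle, so each of its edges is the only edge into its range; hence every
infinite path leaving `r(x_q)` is `σ^q x`, and the prefixes `α = x|[0,p)`, `β = x|[0,q)` witness
tightness.

Conversely, let `x` run around a cycle `l` forever and apply tightness to `σ^{|l|} x = x`.
Comparing `αy` and `βy` position by position shows that every infinite path from `s(α)` is
`σ^{|β|} x`, and this uniqueness propagates along `x`. If an edge `e` entered the cycle at an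
edge `f`, then `e` followed by any infinite path (there are no sources) would be a second infinite
path from `r(f)`, so `e = f`.
-/

/-- A directed graph: edges `E`, vertices `V`, range and source maps. -/
structure DirGraph where
  V : Type
  E : Type
  r : E → V
  s : E → V

/-- Shift an infinite path (sequence of edges) by `p`. -/
def shift (p : ℕ) {α : Type} (x : ℕ → α) : ℕ → α := fun i => x (i + p)

namespace DirGraph

variable (G : DirGraph)

/-- `IsPath G v l u` : the list of edges `l` is a finite path with range `v` and
source `u` (edges are composed so that `s eᵢ = r eᵢ₊₁`). -/
inductive IsPath : G.V → List G.E → G.V → Prop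
  | nil (v : G.V) : IsPath v [] v
  | cons (e : G.E) {l : List G.E} {u : G.V} :
      IsPath (G.s e) l u → IsPath (G.r e) (e :: l) u

/-- An infinite path: a sequence of edges with `s(xᵢ) = r(xᵢ₊₁)`. -/
def InfPath (x : ℕ → G.E) : Prop := ∀ i, G.s (x i) = G.r (x (i + 1))

/-- Prepend a finite path (list of edges) to an infinite path. -/
def prepend (l : List G.E) (x : ℕ → G.E) : ℕ → G.E :=
  fun i => if h : i < l.length then l.get ⟨i, h⟩ else x (i - l.length)

/-- A cycle: a nonempty finite path with equal range and source. -/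
def IsCycle (c : List G.E) : Prop := c ≠ [] ∧ ∃ u, G.IsPath u c u

/-- A finite path contains a cycle if some (contiguous) subpath is a cycle. -/
def ContainsCycle (l : List G.E) : Prop :=
  ∃ p c q, l = p ++ c ++ q ∧ G.IsCycle c

/-- A simple cycle: a cycle containing no other cycle as a proper subpath. -/
def IsSimpleCycle (c : List G.E) : Prop :=
  G.IsCycle c ∧ ∀ p c' q, c = p ++ c' ++ q → G.IsCycle c' → c' = c

/-- A pair of finite paths is minimal if no nontrivial common final segment
can be factored out. -/
def Minimal (a b : List G.E) : Prop :=
  ∀ a' b' n, a = a' ++ n → b = b' ++ n → n = []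

/-- No cycle of `G` has an entrance: for every edge `f` on a cycle, `f` is the
only edge with range `r f`. -/
def NoCycleHasEntrance : Prop :=
  ∀ u c, G.IsCycle c → G.IsPath u c u → ∀ f ∈ c, ∀ e, G.r e = G.r f → e = f

/-- Row-finite: every vertex receives only finitely many edges. -/
def RowFinite : Prop := ∀ v, {e : G.E | G.r e = v}.Finite

/-- No sources: every vertex receives an edge. -/
def NoSources : Prop := ∀ v : G.V, ∃ e, G.r e = v

/-- Minimal cycle-free ancestry pair for the vertices `v, w`. -/
def MCFPair (v w : G.V) (a b : List G.E) : Prop :=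
  (∃ u, G.IsPath v a u ∧ G.IsPath w b u) ∧ G.Minimal a b ∧
    ¬G.ContainsCycle a ∧ ¬G.ContainsCycle b

end DirGraph

/-- A (row-finite, no-sources) graph is tight if every isotropy element
`(x, p - q, x)` of the path groupoid lies in a basic set `Z(α,β)` such that
`αy = βy` for every infinite path `y` with range `s(α)`. -/
def DirGraph.Tight (G : DirGraph) : Prop :=
  ∀ x : ℕ → G.E, G.InfPath x → ∀ p q : ℕ, shift p x = shift q x →
    ∃ (a b : List G.E) (v u : G.V), G.IsPath v a u ∧ G.IsPath v b u ∧
      G.r (x 0) = v ∧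
      (∀ i (h : i < a.length), x i = a.get ⟨i, h⟩) ∧
      shift a.length x = shift b.length x ∧
      (a.length : ℤ) - (b.length : ℤ) = (p : ℤ) - (q : ℤ) ∧
      (∀ y : ℕ → G.E, G.InfPath y → G.r (y 0) = u →
        G.prepend a y = G.prepend b y)

namespace DirGraph

variable {G : DirGraph}

lemma IsPath.eq_of_nil {v u : G.V} (h : G.IsPath v [] u) : u = v := by
  cases h; rfl

lemma IsPath.tail {v u : G.V} {e : G.E} {l : List G.E} (h : G.IsPath v (e :: l) u) :
    G.IsPath (G.s e) l u := by
  cases h; assumption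

lemma IsPath.end_unique {v u u' : G.V} {l : List G.E} (h : G.IsPath v l u)
    (h' : G.IsPath v l u') : u = u' := by
  induction h with
  | nil => exact h'.eq_of_nil.symm
  | cons e _ ih => exact ih h'.tail

lemma IsPath.r_getElem_zero {v u : G.V} {l : List G.E} (h : G.IsPath v l u)
    (hl : 0 < l.length) : G.r l[0] = v := by
  cases h with
  | nil => simp at hl
  | cons => rfl

lemma IsPath.s_getElem {v u : G.V} {l : List G.E} (h : G.IsPath v l u) {i : ℕ}
    (hi : i < l.length) :
    G.s l[i] = if hi' : i + 1 < l.length then G.r l[i + 1] else u := by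
  induction h generalizing i with
  | nil => simp at hi
  | @cons e l u hl ih =>
    cases i with
    | zero =>
      cases l with
      | nil => simp [hl.eq_of_nil]
      | cons f l => exact (hl.r_getElem_zero (by simp)).symm
    | succ i => simpa using ih (i := i) (by simpa using hi)

lemma isPath_ofFn {x : ℕ → G.E} (hx : G.InfPath x) (q n : ℕ) :
    G.IsPath (G.r (x q)) (List.ofFn fun k : Fin n => x (q + k)) (G.r (x (q + n))) := by
  induction n generalizing q with
  | zero => exact .nil _
  | succ n ih =>
    have hcons := IsPath.cons (x q) (hx q ▸ ih (q + 1))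
    rw [List.ofFn_succ]
    simpa [add_assoc, add_comm 1] using hcons

lemma IsPath.end_eq_of_prefix {x : ℕ → G.E} {l : List G.E} {u : G.V}
    (hl : G.IsPath (G.r (x 0)) l u) (hx : G.InfPath x)
    (hxl : ∀ i (h : i < l.length), x i = l.get ⟨i, h⟩) :
    u = G.r (x l.length) := by
  have hl_eq : l = List.ofFn fun k : Fin l.length => x (0 + k) :=
    List.ext_get (by simp) fun i h _ => by simp [hxl i h]
  rw [hl_eq] at hl
  simpa using hl.end_unique (isPath_ofFn hx 0 l.length)

lemma prepend_of_lt {l : List G.E} (z : ℕ → G.E) {i : ℕ} (hi : i < l.length) :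
    G.prepend l z i = l[i] :=
  dif_pos hi

lemma prepend_length_add (l : List G.E) (z : ℕ → G.E) (i : ℕ) :
    G.prepend l z (l.length + i) = z i := by
  simp [prepend]

lemma prepend_ofFn_shift (x : ℕ → G.E) (n : ℕ) :
    G.prepend (List.ofFn fun k : Fin n => x k) (shift n x) = x := by
  funext i
  rcases lt_or_ge i n with hi | hi
  · simp [prepend, hi]
  · obtain ⟨j, rfl⟩ := Nat.exists_eq_add_of_le hi
    simpa [shift, add_comm j] using
      prepend_length_add (List.ofFn fun k : Fin n => x k) (shift n x) j

lemma infPath_prepend_singleton {e : G.E} {z : ℕ → G.E} (hz : G.InfPath z)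
    (hz0 : G.r (z 0) = G.s e) : G.InfPath (G.prepend [e] z) := by
  rintro (_ | i)
  · simpa [prepend] using hz0.symm
  · simpa [prepend] using hz i

lemma InfPath.shift {x : ℕ → G.E} (hx : G.InfPath x) (m : ℕ) : G.InfPath (shift m x) :=
  fun i => by simpa [_root_.shift, add_right_comm i 1 m] using hx (i + m)

lemma exists_infPath (hns : G.NoSources) (v : G.V) :
    ∃ z : ℕ → G.E, G.InfPath z ∧ G.r (z 0) = v := by
  choose f hf using hns
  let w : ℕ → G.V := fun k => Nat.rec v (fun _ pv => G.s (f pv)) k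
  exact ⟨fun k => f (w k), fun i => (hf _).symm, hf v⟩

section Loop

def loop (l : List G.E) (hl : l ≠ []) : ℕ → G.E :=
  fun i => l[i % l.length]'(Nat.mod_lt _ (List.length_pos_of_ne_nil hl))

variable {l : List G.E} (hl : l ≠ [])

lemma loop_mul_add (m : ℕ) {j : ℕ} (hj : j < l.length) :
    loop l hl (l.length * m + j) = l[j] := by
  simp only [loop, Nat.mul_add_mod, Nat.mod_eq_of_lt hj]

lemma shift_length_loop : shift l.length (loop l hl) = shift 0 (loop l hl) := by
  funext i
  simp [shift, loop]

lemma infPath_loop {u : G.V} (hlu : G.IsPath u l u) : G.InfPath (loop l hl) := by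
  intro i
  have hlt := Nat.mod_lt i (List.length_pos_of_ne_nil hl)
  simp only [loop, hlu.s_getElem hlt]
  split_ifs with hnext
  · simp [← Nat.mod_add_mod i, Nat.mod_eq_of_lt hnext]
  · simp [← Nat.mod_add_mod i, show i % l.length + 1 = l.length by omega, hlu.r_getElem_zero]

end Loop

lemma eq_shift_of_prepend_eq {a b : List G.E} {x y : ℕ → G.E} (hlt : b.length < a.length)
    (hxa : ∀ i (h : i < a.length), x i = a.get ⟨i, h⟩)
    (hs : shift a.length x = shift b.length x) (hab : G.prepend a y = G.prepend b y) :
    y = shift b.length x := by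
  set d := a.length - b.length
  have hy_period (k : ℕ) : y (k + d) = y k := by
    have := congrFun hab (a.length + k)
    rw [prepend_length_add, show a.length + k = b.length + (k + d) by omega,
      prepend_length_add] at this
    exact this.symm
  have hy_init (k : ℕ) (hk : k < d) : y k = x (b.length + k) := by
    have := congrFun hab (b.length + k)
    rw [prepend_length_add, prepend_of_lt _ (by omega)] at this
    rw [← this, hxa _ (by omega), List.get_eq_getElem]
  funext k
  induction k using Nat.strong_induction_on with
  | _ k ih =>
    rcases lt_or_ge k d with hk | hk
    · simpa [shift, add_comm] using hy_init k hk
    · obtain ⟨j, rfl⟩ := Nat.exists_eq_add_of_le' hk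
      have hx_period := congrFun hs j
      simp only [shift] at hx_period ih ⊢
      rw [hy_period, ih j (by omega), ← hx_period]
      congr 1
      omega

lemma eq_shift_add_of_forall_eq_shift {x : ℕ → G.E} (hx : G.InfPath x) {m : ℕ}
    (huniq : ∀ y, G.InfPath y → G.r (y 0) = G.r (x m) → y = shift m x) (k : ℕ) :
    ∀ y, G.InfPath y → G.r (y 0) = G.r (x (m + k)) → y = shift (m + k) x := by
  induction k with
  | zero => simpa using huniq
  | succ k ih =>
    intro y hy hy0
    have hcons := ih _ (infPath_prepend_singleton hy (hy0.trans (hx (m + k)).symm))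
      (by simp [prepend])
    funext i
    simpa [prepend, shift, add_assoc, add_comm 1] using congrFun hcons (i + 1)

lemma InfPath.eq_of_forall_eq_of_r_eq {y w : ℕ → G.E} (hy : G.InfPath y)
    (hw : G.InfPath w) (hw_unique : ∀ k e, G.r e = G.r (w k) → e = w k)
    (h0 : G.r (y 0) = G.r (w 0)) : y = w := by
  funext k
  induction k with
  | zero => exact hw_unique 0 _ h0
  | succ k ih => exact hw_unique _ _ (by rw [← hy k, ih, hw k])

lemma exists_cycle_mem {x : ℕ → G.E} (hx : G.InfPath x) {i d : ℕ} (hd : 0 < d)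
    (hper : x (i + d) = x i) : ∃ u c, G.IsCycle c ∧ G.IsPath u c u ∧ x i ∈ c := by
  have hpath := isPath_ofFn hx i d
  rw [hper] at hpath
  refine ⟨_, _, ⟨?_, _, hpath⟩, hpath, List.mem_ofFn.mpr ⟨⟨0, hd⟩, rfl⟩⟩
  exact List.ne_nil_of_length_pos (by simpa using hd)

lemma eq_shift_of_noCycleHasEntrance (hn : G.NoCycleHasEntrance) {x y : ℕ → G.E}
    (hx : G.InfPath x) {p q : ℕ} (hqp : q < p) (hs : shift p x = shift q x)
    (hy : G.InfPath y) (hy0 : G.r (y 0) = G.r (x q)) : y = shift q x := by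
  refine hy.eq_of_forall_eq_of_r_eq (hx.shift q) (fun k e he => ?_) (by simpa [shift] using hy0)
  have hper : x (k + q + (p - q)) = x (k + q) := by
    simpa [shift, show k + q + (p - q) = k + p by omega] using congrFun hs k
  obtain ⟨u, c, hc, hcu, hmem⟩ := exists_cycle_mem hx (by omega) hper
  exact hn u c hc hcu _ hmem e he

lemma prepend_ofFn_eq_of_noCycleHasEntrance (hn : G.NoCycleHasEntrance) {x y : ℕ → G.E}
    (hx : G.InfPath x) {p q : ℕ} (hs : shift p x = shift q x) (hy : G.InfPath y)
    (hy0 : G.r (y 0) = G.r (x p)) :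
    G.prepend (List.ofFn fun k : Fin p => x k) y =
      G.prepend (List.ofFn fun k : Fin q => x k) y := by
  rcases eq_or_ne p q with rfl | hpq
  · rfl
  have hxpq : x p = x q := by simpa [shift] using congrFun hs 0
  have hyx : y = shift p x ∧ y = shift q x := by
    rcases hpq.lt_or_gt with hpq | hqp
    · have := eq_shift_of_noCycleHasEntrance hn hx hpq hs.symm hy hy0
      exact ⟨this, this.trans hs⟩
    · have := eq_shift_of_noCycleHasEntrance hn hx hqp hs hy (hxpq ▸ hy0)
      exact ⟨this.trans hs.symm, this⟩
  calc G.prepend _ y = x := by rw [hyx.1, prepend_ofFn_shift]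
    _ = _ := by rw [hyx.2, prepend_ofFn_shift]

lemma tight_of_noCycleHasEntrance (hn : G.NoCycleHasEntrance) : G.Tight := by
  intro x hx p q hs
  have hxpq : x p = x q := by simpa [shift] using congrFun hs 0
  refine ⟨List.ofFn fun k : Fin p => x k, List.ofFn fun k : Fin q => x k, G.r (x 0), G.r (x p),
    by simpa using isPath_ofFn hx 0 p, by simpa [hxpq] using isPath_ofFn hx 0 q, rfl,
    by simp, by simpa using hs, by simp,
    fun y hy hy0 => prepend_ofFn_eq_of_noCycleHasEntrance hn hx hs hy hy0⟩

lemma noCycleHasEntrance_of_tight (hns : G.NoSources) (ht : G.Tight) :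
    G.NoCycleHasEntrance := by
  intro u l hl hlu f hf e he
  obtain ⟨j, hj, rfl⟩ := List.mem_iff_getElem.mp hf
  set x := loop l hl.1
  have hx : G.InfPath x := infPath_loop hl.1 hlu
  obtain ⟨a, b, v, u', hpa, -, hv, hxa, hs, hlen, hab⟩ := ht x hx _ _ (shift_length_loop hl.1)
  have hlt : b.length < a.length := by
    have := List.length_pos_of_ne_nil hl.1
    omega
  have hu' : u' = G.r (x b.length) := by
    subst hv
    rw [hpa.end_eq_of_prefix hx hxa]
    simpa [shift] using congrArg G.r (congrFun hs 0)
  have huniq := eq_shift_add_of_forall_eq_shift hx (m := b.length) (fun y hy hy0 =>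
    eq_shift_of_prepend_eq hlt hxa hs (hab y hy (hy0.trans hu'.symm)))
  obtain ⟨k, hk⟩ : ∃ k, b.length + k = l.length * b.length + j :=
    ⟨_, Nat.add_sub_of_le ((Nat.le_mul_of_pos_left _ (List.length_pos_of_ne_nil hl.1)).trans
      (Nat.le_add_right _ j))⟩
  have hxk : x (b.length + k) = l[j] := hk ▸ loop_mul_add hl.1 _ hj
  obtain ⟨z, hz, hz0⟩ := exists_infPath hns (G.s e)
  have := huniq k _ (infPath_prepend_singleton hz hz0) (by simpa [prepend, hxk] using he)
  simpa [prepend, shift, add_comm k, hxk] using congrFun this 0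

end DirGraph

theorem tight_iff_no_cycle_has_entrance_general (G : DirGraph)
    (hns : G.NoSources) :
    G.Tight ↔ G.NoCycleHasEntrance :=
  ⟨G.noCycleHasEntrance_of_tight hns, G.tight_of_noCycleHasEntrance⟩

/-- A directed graph (viewed as a 1-graph) is tight iff no cycle
has an entrance. -/
theorem tight_iff_no_cycle_has_entrance (G : DirGraph)
    (hrf : G.RowFinite) (hns : G.NoSources) :
    G.Tight ↔ G.NoCycleHasEntrance :=
  tight_iff_no_cycle_has_entrance_general G hns
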